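/- arXiv:1608.00139 — 4 statements merged into one kernel-verified Lean document; each statement's English description precedes it below -/
import Mathlib

section
/- Let R₁ be an N×N matrix with entries in {0,1} and 0 < ε ≤ 1/(1 + ‖R₁‖_∞). Let R₂⁽ᵏ⁾ be given by R₂⁽⁰⁾ = 0, R₂⁽ᵏ⁺¹⁾ = min₁(R₁ + R₁ R₂⁽ᵏ⁾), and S⁽ᵏ⁾ by S⁽⁰⁾ = 0, S⁽ᵏ⁺¹⁾ = ε(R₁ + R₁ S⁽ᵏ⁾). Then for all k and all indices i,j: (R₂⁽ᵏ⁾)_{ij} = 1 if and only if (S⁽ᵏ⁾)_{ij} > 0. -/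
open Matrix

/-- entrywise `min₁(t) = min(t,1)` -/
noncomputable def min1M {N : ℕ} (A : Matrix (Fin N) (Fin N) ℝ) :
    Matrix (Fin N) (Fin N) ℝ := Matrix.of fun i j => min (A i j) 1

/-- `‖A‖_∞`: maximum absolute row sum. -/
noncomputable def normInf {N : ℕ} [NeZero N] (A : Matrix (Fin N) (Fin N) ℝ) : ℝ :=
  Finset.univ.sup' Finset.univ_nonempty fun i => ∑ j, |A i j|

/-!
Both iterations have the form `X ↦ f (R₁ + R₁ X)` with entrywise nonnegative matrices, and the
positivity pattern of `R₁ + R₁ X` depends only on that of `X`: its `(i, j)` entry is positive iff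
`R₁ i j > 0`, or `R₁ i l > 0` and `X l j > 0` for some `l`. Scaling by `ε > 0` keeps the pattern,
and since `R₁` and `R₂⁽ᵏ⁾` are `0/1` matrices, every positive entry of `R₁ + R₁ R₂⁽ᵏ⁾` is at
least `1`, so `min₁` turns it into the indicator matrix of its pattern. Induct on `k`.
-/

namespace Matrix

variable {m n o : Type*} [Fintype n]

theorem mul_apply_nonneg {A : Matrix m n ℝ} {B : Matrix n o ℝ}
    (hA : ∀ i l, 0 ≤ A i l) (hB : ∀ l j, 0 ≤ B l j) (i : m) (j : o) : 0 ≤ (A * B) i j :=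
  Finset.sum_nonneg fun l _ => mul_nonneg (hA i l) (hB l j)

theorem mul_apply_pos_iff {A : Matrix m n ℝ} {B : Matrix n o ℝ}
    (hA : ∀ i l, 0 ≤ A i l) (hB : ∀ l j, 0 ≤ B l j) (i : m) (j : o) :
    0 < (A * B) i j ↔ ∃ l, 0 < A i l ∧ 0 < B l j := by
  rw [mul_apply, Finset.sum_pos_iff_of_nonneg fun l _ => mul_nonneg (hA i l) (hB l j)]
  refine exists_congr fun l => ?_
  simp only [Finset.mem_univ, true_and]
  exact ⟨fun h => ⟨(hA i l).lt_of_ne (by intro h'; simp [← h'] at h),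
    (hB l j).lt_of_ne (by intro h'; simp [← h'] at h)⟩, fun h => mul_pos h.1 h.2⟩

variable {A M M' : Matrix n n ℝ}

theorem add_mul_self_apply_nonneg (hA : ∀ i j, 0 ≤ A i j) (hM : ∀ i j, 0 ≤ M i j) (i j : n) :
    0 ≤ (A + A * M) i j :=
  add_nonneg (hA i j) (mul_apply_nonneg hA hM i j)

theorem add_mul_self_apply_pos_iff (hA : ∀ i j, 0 ≤ A i j) (hM : ∀ i j, 0 ≤ M i j) (i j : n) :
    0 < (A + A * M) i j ↔ 0 < A i j ∨ ∃ l, 0 < A i l ∧ 0 < M l j := by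
  rw [add_apply, ← mul_apply_pos_iff hA hM]
  constructor
  · intro h
    by_contra! h'
    linarith [h'.1, h'.2, hA i j, mul_apply_nonneg hA hM i j]
  · rintro (h | h)
    · linarith [mul_apply_nonneg hA hM i j]
    · linarith [hA i j]

theorem add_mul_self_apply_pos_congr (hA : ∀ i j, 0 ≤ A i j)
    (hM : ∀ i j, 0 ≤ M i j) (hM' : ∀ i j, 0 ≤ M' i j) (h : ∀ i j, 0 < M i j ↔ 0 < M' i j)
    (i j : n) : 0 < (A + A * M) i j ↔ 0 < (A + A * M') i j := by
  simp only [add_mul_self_apply_pos_iff hA hM, add_mul_self_apply_pos_iff hA hM', h]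

theorem one_le_add_mul_self_apply_of_pos (hA : ∀ i j, 0 ≤ A i j) (hM : ∀ i j, 0 ≤ M i j)
    (hA1 : ∀ i j, 0 < A i j → 1 ≤ A i j) (hM1 : ∀ i j, 0 < M i j → 1 ≤ M i j) (i j : n)
    (hpos : 0 < (A + A * M) i j) : 1 ≤ (A + A * M) i j := by
  rw [add_apply]
  rcases (add_mul_self_apply_pos_iff hA hM i j).1 hpos with h | ⟨l, hAl, hMl⟩
  · linarith [hA1 i j h, mul_apply_nonneg hA hM i j]
  · have : A i l * M l j ≤ (A * M) i j :=
      Finset.single_le_sum (f := fun l => A i l * M l j)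
        (fun l _ => mul_nonneg (hA i l) (hM l j)) (Finset.mem_univ l)
    linarith [one_le_mul_of_one_le_of_one_le (hA1 i l hAl) (hM1 l j hMl), hA i j]

end Matrix

theorem nonneg_of_eq_zero_or_eq_one {x : ℝ} (h : x = 0 ∨ x = 1) : 0 ≤ x := by
  rcases h with h | h <;> simp [h]

theorem one_le_of_eq_zero_or_eq_one {x : ℝ} (h : x = 0 ∨ x = 1) (hx : 0 < x) : 1 ≤ x :=
  (h.resolve_left hx.ne').ge

section min1M

variable {N : ℕ}

theorem min1M_apply_eq_one_iff {T : Matrix (Fin N) (Fin N) ℝ}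
    (hT : ∀ i j, 0 < T i j → 1 ≤ T i j) (i j : Fin N) : min1M T i j = 1 ↔ 0 < T i j := by
  simp only [min1M, of_apply, min_eq_right_iff]
  exact ⟨zero_lt_one.trans_le, hT i j⟩

theorem min1M_apply_eq_zero_or_one {T : Matrix (Fin N) (Fin N) ℝ} (hT0 : ∀ i j, 0 ≤ T i j)
    (hT : ∀ i j, 0 < T i j → 1 ≤ T i j) (i j : Fin N) : min1M T i j = 0 ∨ min1M T i j = 1 := by
  rw [min1M_apply_eq_one_iff hT]
  rcases (hT0 i j).eq_or_lt with h | h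
  · simp [min1M, ← h]
  · exact Or.inr h

variable {A M S : Matrix (Fin N) (Fin N) ℝ}

theorem one_le_add_mul_self_apply_of_pos_of_zero_one (hA : ∀ i j, A i j = 0 ∨ A i j = 1)
    (hM : ∀ i j, M i j = 0 ∨ M i j = 1) (i j : Fin N) (hpos : 0 < (A + A * M) i j) :
    1 ≤ (A + A * M) i j :=
  one_le_add_mul_self_apply_of_pos (fun i j => nonneg_of_eq_zero_or_eq_one (hA i j))
    (fun i j => nonneg_of_eq_zero_or_eq_one (hM i j))
    (fun i j => one_le_of_eq_zero_or_eq_one (hA i j))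
    (fun i j => one_le_of_eq_zero_or_eq_one (hM i j)) i j hpos

theorem min1M_add_mul_self_apply_eq_zero_or_one (hA : ∀ i j, A i j = 0 ∨ A i j = 1)
    (hM : ∀ i j, M i j = 0 ∨ M i j = 1) (i j : Fin N) :
    min1M (A + A * M) i j = 0 ∨ min1M (A + A * M) i j = 1 :=
  min1M_apply_eq_zero_or_one
    (add_mul_self_apply_nonneg (fun i j => nonneg_of_eq_zero_or_eq_one (hA i j))
      (fun i j => nonneg_of_eq_zero_or_eq_one (hM i j)))
    (one_le_add_mul_self_apply_of_pos_of_zero_one hA hM) i j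

theorem min1M_add_mul_self_apply_eq_one_iff (hA : ∀ i j, A i j = 0 ∨ A i j = 1)
    (hM : ∀ i j, M i j = 0 ∨ M i j = 1) (hS : ∀ i j, 0 ≤ S i j)
    (hMS : ∀ i j, M i j = 1 ↔ 0 < S i j) {ε : ℝ} (hε : 0 < ε) (i j : Fin N) :
    min1M (A + A * M) i j = 1 ↔ 0 < (ε • (A + A * S)) i j := by
  have hA0 i j := nonneg_of_eq_zero_or_eq_one (hA i j)
  have hM0 i j := nonneg_of_eq_zero_or_eq_one (hM i j)
  have hsupp i j : 0 < M i j ↔ 0 < S i j := by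
    rw [← hMS]
    rcases hM i j with h | h <;> simp [h]
  rw [min1M_apply_eq_one_iff (one_le_add_mul_self_apply_of_pos_of_zero_one hA hM),
    Matrix.smul_apply, smul_eq_mul, mul_pos_iff_of_pos_left hε]
  exact add_mul_self_apply_pos_congr hA0 hM0 hS hsupp i j

end min1M

theorem iterations_agree_on_support_general {N : ℕ}
    (R1 : Matrix (Fin N) (Fin N) ℝ)
    (hR1 : ∀ i j, R1 i j = 0 ∨ R1 i j = 1)
    (ε : ℝ) (hε0 : 0 < ε)
    (R2 : ℕ → Matrix (Fin N) (Fin N) ℝ)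
    (hR20 : R2 0 = 0)
    (hR2step : ∀ k, R2 (k + 1) = min1M (R1 + R1 * R2 k))
    (S : ℕ → Matrix (Fin N) (Fin N) ℝ)
    (hS0 : S 0 = 0)
    (hSstep : ∀ k, S (k + 1) = ε • (R1 + R1 * S k)) :
    ∀ k i j, R2 k i j = 1 ↔ 0 < S k i j := by
  have hR1nn i j := nonneg_of_eq_zero_or_eq_one (hR1 i j)
  have invariant : ∀ k, (∀ i j, R2 k i j = 0 ∨ R2 k i j = 1) ∧ (∀ i j, 0 ≤ S k i j) ∧
      ∀ i j, (R2 k i j = 1 ↔ 0 < S k i j) := by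
    intro k
    induction k with
    | zero => simp [hR20, hS0]
    | succ k ih =>
      obtain ⟨hR2, hSnn, hsupp⟩ := ih
      rw [hR2step, hSstep]
      exact ⟨min1M_add_mul_self_apply_eq_zero_or_one hR1 hR2,
        fun i j => mul_nonneg hε0.le (add_mul_self_apply_nonneg hR1nn hSnn i j),
        min1M_add_mul_self_apply_eq_one_iff hR1 hR2 hSnn hsupp hε0⟩
  exact fun k => (invariant k).2.2

theorem iterations_agree_on_support {N : ℕ} [NeZero N]
    (R1 : Matrix (Fin N) (Fin N) ℝ)
    (hR1 : ∀ i j, R1 i j = 0 ∨ R1 i j = 1)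
    (ε : ℝ) (hε0 : 0 < ε) (hε1 : ε ≤ 1 / (1 + normInf R1))
    (R2 : ℕ → Matrix (Fin N) (Fin N) ℝ)
    (hR20 : R2 0 = 0)
    (hR2step : ∀ k, R2 (k + 1) = min1M (R1 + R1 * R2 k))
    (S : ℕ → Matrix (Fin N) (Fin N) ℝ)
    (hS0 : S 0 = 0)
    (hSstep : ∀ k, S (k + 1) = ε • (R1 + R1 * S k)) :
    ∀ k i j, R2 k i j = 1 ↔ 0 < S k i j :=
  iterations_agree_on_support_general R1 hR1 ε hε0 R2 hR20 hR2step S hS0 hSstep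
end

section
/- Let R₁ be an N×N matrix with entries in {0,1}, 0 < ε ≤ 1/(1 + ‖R₁‖_∞), and let R₂⁽ᵏ⁾, S⁽ᵏ⁾ be as in the two iterations R₂⁽ᵏ⁺¹⁾ = min₁(R₁ + R₁ R₂⁽ᵏ⁾) and S⁽ᵏ⁺¹⁾ = ε(R₁ + R₁ S⁽ᵏ⁾), both starting at 0. Then for all k and all i,j: if (R₂⁽ᵏ⁾)_{ij} = 1 then (S⁽ᵏ⁾)_{ij} ≥ εᵏ. -/
/-!
Since `min₁(t) ≤ t` and `R₁ ≥ 0`, the invariant `εᵏ R₂⁽ᵏ⁾ ≤ S⁽ᵏ⁾` (entrywise) propagates: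
`εᵏ⁺¹ R₂⁽ᵏ⁺¹⁾ ≤ ε (εᵏ R₁ + R₁ (εᵏ R₂⁽ᵏ⁾)) ≤ ε (R₁ + R₁ S⁽ᵏ⁾)`, where `εᵏ ≤ 1` because
`ε ≤ 1/(1 + ‖R₁‖_∞) ≤ 1`. At an entry where `R₂⁽ᵏ⁾` equals `1` this reads `εᵏ ≤ S⁽ᵏ⁾`.
-/

open Matrix

lemma normInf_nonneg {N : ℕ} [NeZero N] (A : Matrix (Fin N) (Fin N) ℝ) : 0 ≤ normInf A :=
  (Finset.sum_nonneg fun j _ => abs_nonneg (A 0 j)).trans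
    (Finset.le_sup' (fun i => ∑ j, |A i j|) (Finset.mem_univ 0))

lemma le_one_of_le_one_div_one_add_normInf {N : ℕ} [NeZero N] {A : Matrix (Fin N) (Fin N) ℝ}
    {ε : ℝ} (hε : ε ≤ 1 / (1 + normInf A)) : ε ≤ 1 :=
  hε.trans <| div_le_one_of_le₀ (by linarith [normInf_nonneg A]) (by linarith [normInf_nonneg A])

section

variable {n α : Type*} [Fintype n] [CommSemiring α] [PartialOrder α] [IsOrderedRing α]

lemma Matrix.mul_apply_le_mul_apply {A B C : Matrix n n α} (hA : ∀ i j, 0 ≤ A i j)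
    (hBC : ∀ i j, B i j ≤ C i j) (i j : n) : (A * B) i j ≤ (A * C) i j := by
  simp only [mul_apply]
  exact Finset.sum_le_sum fun l _ => mul_le_mul_of_nonneg_left (hBC l j) (hA i l)

theorem pow_mul_le_of_le_add_mul {A : Matrix n n α} (hA : ∀ i j, 0 ≤ A i j) {ε : α}
    (hε0 : 0 ≤ ε) (hε1 : ε ≤ 1) {R S : ℕ → Matrix n n α} (h0 : ∀ i j, R 0 i j ≤ S 0 i j)
    (hR : ∀ k i j, R (k + 1) i j ≤ (A + A * R k) i j) (hS : ∀ k, S (k + 1) = ε • (A + A * S k)) :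
    ∀ k i j, ε ^ k * R k i j ≤ S k i j := by
  intro k
  induction k with
  | zero => simpa using h0
  | succ k ih =>
    intro i j
    have hεk : ε ^ k * A i j ≤ A i j := mul_le_of_le_one_left (hA i j) (pow_le_one₀ hε0 hε1)
    have hmul : (A * (ε ^ k • R k)) i j ≤ (A * S k) i j :=
      mul_apply_le_mul_apply hA (fun l m => by simpa using ih l m) i j
    calc ε ^ (k + 1) * R (k + 1) i j
        ≤ ε ^ (k + 1) * (A + A * R k) i j := mul_le_mul_of_nonneg_left (hR k i j) (by positivity)
      _ = ε * (ε ^ k * A i j + (A * (ε ^ k • R k)) i j) := by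
        rw [Matrix.mul_smul, Matrix.smul_apply, Matrix.add_apply, smul_eq_mul]; ring
      _ ≤ ε * (A + A * S k) i j := mul_le_mul_of_nonneg_left (add_le_add hεk hmul) hε0
      _ = S (k + 1) i j := by rw [hS k, Matrix.smul_apply, smul_eq_mul]

end

theorem iterations_eps_pow_lower_bound {N : ℕ} [NeZero N]
    (R1 : Matrix (Fin N) (Fin N) ℝ)
    (hR1 : ∀ i j, R1 i j = 0 ∨ R1 i j = 1)
    (ε : ℝ) (hε0 : 0 < ε) (hε1 : ε ≤ 1 / (1 + normInf R1))
    (R2 : ℕ → Matrix (Fin N) (Fin N) ℝ)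
    (hR20 : R2 0 = 0)
    (hR2step : ∀ k, R2 (k + 1) = min1M (R1 + R1 * R2 k))
    (S : ℕ → Matrix (Fin N) (Fin N) ℝ)
    (hS0 : S 0 = 0)
    (hSstep : ∀ k, S (k + 1) = ε • (R1 + R1 * S k)) :
    ∀ k i j, R2 k i j = 1 → ε ^ k ≤ S k i j := by
  have hR1nonneg : ∀ i j, 0 ≤ R1 i j := fun i j => by rcases hR1 i j with h | h <;> simp [h]
  have key := pow_mul_le_of_le_add_mul hR1nonneg hε0.le (le_one_of_le_one_div_one_add_normInf hε1)
    (R := R2) (S := S) (by simp [hR20, hS0])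
    (fun k i j => by rw [hR2step k]; exact min_le_left _ _) hSstep
  intro k i j hk
  simpa [hk] using key k i j
end

section
/- Let R₁ be an N×N matrix with entries in {0,1} and 0 < ε ≤ 1/(1 + ‖R₁‖_∞). Let S* be the least nonnegative solution of S = ε(R₁ + R₁S). Define R* ∈ {0,1}^{N×N} by (R*)_{ij} = 1 if (S*)_{ij} > 0 and 0 otherwise. Then R* is the least solution of R = min₁(R₁ + R₁R) among {0,1}-matrices, in the entrywise order. -/
/-!
Since `R1 ≥ 0` and `ε > 0`, the positivity pattern of `S*` satisfies the Boolean form of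
`S = ε(R1 + R1 S)`: `S*ᵢⱼ > 0` iff `R1ᵢⱼ > 0` or `R1ᵢₖ > 0` and `S*ₖⱼ > 0` for some `k`.
For `{0,1}`-matrices this is exactly the equation `R = min₁(R1 + R1 R)`, so `R*` solves it.
Conversely, let `R` be a `{0,1}` solution and `v` the restriction of a column of `S*` to the
zeros of that column of `R`. A zero of `R` forces the corresponding entry of `R1` and the
entries of `R` reached through `R1` to vanish, so `v ≤ εR1 v`. As
`‖εR1‖_∞ = ε‖R1‖_∞ ≤ 1 - ε < 1`, this gives `v = 0`: `S*`, hence `R*`, vanishes wherever `R`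
does.
-/

open Matrix

attribute [local instance] Matrix.linftyOpNormedAddCommGroup Matrix.linftyOpNormedSpace
  Matrix.linftyOpNormSMulClass

theorem normInf_eq_norm {N : ℕ} [NeZero N] (A : Matrix (Fin N) (Fin N) ℝ) :
    normInf A = ‖A‖ := by
  rw [linfty_opNorm_def, ← Finset.sup'_eq_sup Finset.univ_nonempty,
    Finset.apply_sup'_eq_sup'_comp Finset.univ_nonempty _ NNReal.coe_max]
  simp [normInf, Function.comp_def]

section

variable {ι : Type*}

def IsZeroOne (A : Matrix ι ι ℝ) : Prop := ∀ i j, A i j = 0 ∨ A i j = 1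

theorem IsZeroOne.nonneg {A : Matrix ι ι ℝ} (hA : IsZeroOne A) (i j : ι) : 0 ≤ A i j := by
  rcases hA i j with h | h <;> simp [h]

variable [Fintype ι]

theorem eq_zero_of_le_mulVec_of_norm_lt_one {A : Matrix ι ι ℝ} (hA : ‖A‖ < 1) {v : ι → ℝ}
    (hv : 0 ≤ v) (hle : v ≤ A *ᵥ v) : v = 0 := by
  have hnorm : ‖v‖ ≤ ‖A *ᵥ v‖ := (pi_norm_le_iff_of_nonneg (norm_nonneg _)).mpr fun i =>
    calc ‖v i‖ = v i := Real.norm_of_nonneg (hv i)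
      _ ≤ (A *ᵥ v) i := hle i
      _ ≤ ‖A *ᵥ v‖ := (le_abs_self _).trans (norm_le_pi_norm (A *ᵥ v) i)
  have : ‖v‖ ≤ ‖A‖ * ‖v‖ := hnorm.trans (linfty_opNorm_mulVec A v)
  exact norm_eq_zero.mp <| by nlinarith [norm_nonneg v]

theorem pos_add_mul_apply_iff {A B : Matrix ι ι ℝ} (hA : ∀ i j, 0 ≤ A i j)
    (hB : ∀ i j, 0 ≤ B i j) (i j : ι) :
    0 < (A + A * B) i j ↔ 0 < A i j ∨ ∃ k, 0 < A i k ∧ 0 < B k j := by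
  have hAB : ∀ k, 0 ≤ A i k * B k j := fun k => mul_nonneg (hA i k) (hB k j)
  have hsum : 0 < A i j + ∑ k, A i k * B k j ↔ 0 < A i j ∨ 0 < ∑ k, A i k * B k j := by
    have := Finset.sum_nonneg fun k (_ : k ∈ Finset.univ) => hAB k
    constructor
    · intro h
      by_contra! h'
      linarith [h'.1, h'.2]
    · rintro (h | h) <;> linarith [hA i j]
  have hmul : ∀ k, 0 < A i k * B k j ↔ 0 < A i k ∧ 0 < B k j := fun k => by
    rw [mul_pos_iff, or_iff_left fun h => h.1.not_ge (hA i k)]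
  rw [Matrix.add_apply, mul_apply, hsum, Finset.sum_pos_iff_of_nonneg fun k _ => hAB k]
  simp only [Finset.mem_univ, true_and, hmul]

theorem one_le_add_mul_apply_of_pos {A B : Matrix ι ι ℝ} (hA : IsZeroOne A) (hB : IsZeroOne B)
    {i j : ι} (hpos : 0 < (A + A * B) i j) : 1 ≤ (A + A * B) i j := by
  have hAB : ∀ k, 0 ≤ A i k * B k j := fun k => mul_nonneg (hA.nonneg i k) (hB.nonneg k j)
  have hsum : 0 ≤ ∑ k, A i k * B k j := Finset.sum_nonneg fun k _ => hAB k
  rw [Matrix.add_apply, mul_apply] at hpos ⊢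
  rcases (pos_add_mul_apply_iff hA.nonneg hB.nonneg i j).mp hpos with hij | ⟨k, hik, hkj⟩
  · linarith [(hA i j).resolve_left hij.ne']
  · have hk : A i k * B k j = 1 := by
      rw [(hA i k).resolve_left hik.ne', (hB k j).resolve_left hkj.ne', one_mul]
    linarith [hA.nonneg i j, hk ▸ Finset.single_le_sum (fun k _ => hAB k) (Finset.mem_univ k)]

end

section

variable {N : ℕ}

theorem min1M_add_mul_apply {A B : Matrix (Fin N) (Fin N) ℝ} (hA : IsZeroOne A)
    (hB : IsZeroOne B) (i j : Fin N) :
    min1M (A + A * B) i j = if 0 < (A + A * B) i j then 1 else 0 := by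
  rw [min1M, of_apply]
  split_ifs with hpos
  · exact min_eq_right (one_le_add_mul_apply_of_pos hA hB hpos)
  · have hnonneg : 0 ≤ (A + A * B) i j := by
      rw [Matrix.add_apply, mul_apply]
      exact add_nonneg (hA.nonneg i j)
        (Finset.sum_nonneg fun k _ => mul_nonneg (hA.nonneg i k) (hB.nonneg k j))
    rw [le_antisymm (not_lt.mp hpos) hnonneg]
    exact min_eq_left zero_le_one

theorem threshold_eq_min1M_of_solution {R1 S T : Matrix (Fin N) (Fin N) ℝ} {ε : ℝ}
    (hR1 : IsZeroOne R1) (hε : 0 < ε) (hS : ∀ i j, 0 ≤ S i j) (hSsol : S = ε • (R1 + R1 * S))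
    (hT : ∀ i j, T i j = if 0 < S i j then 1 else 0) : T = min1M (R1 + R1 * T) := by
  have hT01 : IsZeroOne T := fun i j => by rw [hT]; split_ifs <;> simp
  have hTpos : ∀ i j, 0 < T i j ↔ 0 < S i j := fun i j => by rw [hT]; split_ifs with h <;> simp [h]
  have hSpos : ∀ i j, 0 < S i j ↔ 0 < (R1 + R1 * S) i j := fun i j => by
    conv_lhs => rw [hSsol]
    rw [Matrix.smul_apply, smul_eq_mul, mul_pos_iff_of_pos_left hε]
  ext i j
  rw [hT, min1M_add_mul_apply hR1 hT01]
  refine if_congr ?_ rfl rfl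
  rw [hSpos, pos_add_mul_apply_iff hR1.nonneg hS, pos_add_mul_apply_iff hR1.nonneg hT01.nonneg]
  simp only [hTpos]

theorem min1M_fixed_apply_eq_zero {R1 R : Matrix (Fin N) (Fin N) ℝ} (hR1 : IsZeroOne R1)
    (hR : IsZeroOne R) (hRfix : R = min1M (R1 + R1 * R)) {i j : Fin N} (hij : R i j = 0) :
    R1 i j = 0 ∧ ∀ k, R1 i k ≠ 0 → R k j = 0 := by
  have hfix := congrFun₂ hRfix i j
  rw [min1M_add_mul_apply hR1 hR, hij] at hfix
  split_ifs at hfix with hpos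
  · exact absurd hfix zero_ne_one
  rw [pos_add_mul_apply_iff hR1.nonneg hR.nonneg] at hpos
  push Not at hpos
  refine ⟨le_antisymm hpos.1 (hR1.nonneg i j), fun k hk => ?_⟩
  exact le_antisymm (hpos.2 k ((hR1.nonneg i k).lt_of_ne' hk)) (hR.nonneg k j)

theorem solution_apply_eq_zero_of_min1M_fixed {R1 R S : Matrix (Fin N) (Fin N) ℝ} {ε : ℝ}
    (hR1 : IsZeroOne R1) (hR : IsZeroOne R) (hRfix : R = min1M (R1 + R1 * R))
    (hε : 0 ≤ ε) (hεR1 : ‖ε • R1‖ < 1) (hS : ∀ i j, 0 ≤ S i j)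
    (hSsol : S = ε • (R1 + R1 * S)) {i j : Fin N} (hij : R i j = 0) : S i j = 0 := by
  let v : Fin N → ℝ := fun k => if R k j = 0 then S k j else 0
  have hv : 0 ≤ v := fun k => by dsimp only [v]; split_ifs <;> simp [hS]
  have hle : v ≤ (ε • R1) *ᵥ v := fun i => by
    by_cases hi : R i j = 0
    · obtain ⟨hR1ij, hcol⟩ := min1M_fixed_apply_eq_zero hR1 hR hRfix hi
      have hterm : ∀ k, R1 i k * S k j = R1 i k * v k := fun k => by
        by_cases hk : R1 i k = 0
        · simp [hk]
        · simp [v, hcol k hk]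
      refine le_of_eq ?_
      calc v i = ε * (R1 i j + ∑ k, R1 i k * S k j) := by
            simp only [v, if_pos hi]
            conv_lhs => rw [hSsol]
            simp [mul_apply]
        _ = ((ε • R1) *ᵥ v) i := by
            simp [hR1ij, hterm, mulVec, dotProduct, Finset.mul_sum, mul_assoc]
    · calc v i = 0 := if_neg hi
        _ ≤ ((ε • R1) *ᵥ v) i := by
            simp only [mulVec, dotProduct, Matrix.smul_apply, smul_eq_mul]
            exact Finset.sum_nonneg fun k _ => mul_nonneg (mul_nonneg hε (hR1.nonneg i k)) (hv k)
  simpa [v, hij] using congrFun (eq_zero_of_le_mulVec_of_norm_lt_one hεR1 hv hle) i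

end

theorem threshold_of_least_solution_general {N : ℕ} [NeZero N]
    (R1 : Matrix (Fin N) (Fin N) ℝ)
    (hR1 : ∀ i j, R1 i j = 0 ∨ R1 i j = 1)
    (ε : ℝ) (hε0 : 0 < ε) (hε1 : ε ≤ 1 / (1 + normInf R1))
    (Sstar : Matrix (Fin N) (Fin N) ℝ)
    (hSnonneg : ∀ i j, 0 ≤ Sstar i j)
    (hSsol : Sstar = ε • (R1 + R1 * Sstar))
    (Rstar : Matrix (Fin N) (Fin N) ℝ)
    (hRstar : ∀ i j, Rstar i j = if 0 < Sstar i j then 1 else 0) :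
    Rstar = min1M (R1 + R1 * Rstar) ∧
      ∀ R : Matrix (Fin N) (Fin N) ℝ,
        (∀ i j, R i j = 0 ∨ R i j = 1) →
        R = min1M (R1 + R1 * R) →
        ∀ i j, Rstar i j ≤ R i j := by
  have hcontr : ‖ε • R1‖ < 1 := by
    have hn : 0 ≤ normInf R1 := normInf_eq_norm R1 ▸ norm_nonneg _
    rw [le_div_iff₀ (by positivity)] at hε1
    rw [norm_smul, Real.norm_of_nonneg hε0.le, ← normInf_eq_norm]
    nlinarith
  refine ⟨threshold_eq_min1M_of_solution hR1 hε0 hSnonneg hSsol hRstar, fun R hR hRfix i j => ?_⟩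
  rcases hR i j with h | h
  · rw [hRstar, solution_apply_eq_zero_of_min1M_fixed hR1 hR hRfix hε0.le hcontr hSnonneg hSsol h,
      h, if_neg (lt_irrefl 0)]
  · rw [h, hRstar]
    split_ifs <;> norm_num

theorem threshold_of_least_solution {N : ℕ} [NeZero N]
    (R1 : Matrix (Fin N) (Fin N) ℝ)
    (hR1 : ∀ i j, R1 i j = 0 ∨ R1 i j = 1)
    (ε : ℝ) (hε0 : 0 < ε) (hε1 : ε ≤ 1 / (1 + normInf R1))
    (Sstar : Matrix (Fin N) (Fin N) ℝ)
    (hSnonneg : ∀ i j, 0 ≤ Sstar i j)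
    (hSsol : Sstar = ε • (R1 + R1 * Sstar))
    (hSleast : ∀ S' : Matrix (Fin N) (Fin N) ℝ,
      (∀ i j, 0 ≤ S' i j) → S' = ε • (R1 + R1 * S') →
      ∀ i j, Sstar i j ≤ S' i j)
    (Rstar : Matrix (Fin N) (Fin N) ℝ)
    (hRstar : ∀ i j, Rstar i j = if 0 < Sstar i j then 1 else 0) :
    Rstar = min1M (R1 + R1 * Rstar) ∧
      ∀ R : Matrix (Fin N) (Fin N) ℝ,
        (∀ i j, R i j = 0 ∨ R i j = 1) →
        R = min1M (R1 + R1 * R) →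
        ∀ i j, Rstar i j ≤ R i j :=
  threshold_of_least_solution_general R1 hR1 ε hε0 hε1 Sstar hSnonneg hSsol Rstar hRstar
end

section
/- Let R₁ be an N×N {0,1}-matrix. Consider the two-sided Boolean iteration R⁽⁰⁾ = 0, R⁽ᵏ⁺¹⁾ = min₁(I + R₁ R⁽ᵏ⁾ R₁ᵀ). Its limit R* (which exists since the sequence is entrywise increasing and bounded by 𝟙, with {0,1} entries) satisfies: (R*)_{ij} = 1 if and only if there exists n ≥ 0 and a vertex w such that there are directed paths of length n from i to w and from j to w in the graph with adjacency matrix R₁ — i.e., R* encodes the same-generation relation. -/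
/-!
By induction on `k`, `R k` is the `{0,1}`-matrix of the relation "`i` and `j` are of the same
generation at some depth `n < k`": for `{0,1}`-matrices, `(R1 * R k * R1ᵀ) i j` counts the pairs of
edges `i → a`, `j → b` with `R k a b = 1`, so `min1M` turns `1 + R1 * R k * R1ᵀ` into the indicator
of "`i = j` or such a pair exists". Every entry of the sequence is therefore eventually constant,
equal to the indicator of the same-generation relation, which is thus the limit.
-/

open Matrix Filter Topology

/-- There is a directed path of length `n` from `a` to `b` in the graph
with adjacency matrix `R1` (a path of length 0 means `a = b`). -/
def hasPath {N : ℕ} (R1 : Matrix (Fin N) (Fin N) ℝ) (n : ℕ) (a b : Fin N) : Prop :=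
  ∃ v : Fin (n + 1) → Fin N,
    v 0 = a ∧ v (Fin.last n) = b ∧
    ∀ t : Fin n, R1 (v t.castSucc) (v t.succ) = 1

section Paths

variable {N : ℕ} (R1 : Matrix (Fin N) (Fin N) ℝ)

lemma hasPath_zero {a b : Fin N} : hasPath R1 0 a b ↔ a = b := by
  constructor
  · rintro ⟨v, rfl, rfl, -⟩
    rfl
  · rintro rfl
    exact ⟨fun _ => a, rfl, rfl, Fin.elim0⟩

lemma hasPath_succ {n : ℕ} {a b : Fin N} :
    hasPath R1 (n + 1) a b ↔ ∃ c, R1 a c = 1 ∧ hasPath R1 n c b := by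
  constructor
  · rintro ⟨v, rfl, rfl, hv⟩
    refine ⟨v 1, hv 0, Fin.tail v, rfl, congrArg v (Fin.succ_last n), fun t => ?_⟩
    simpa only [Fin.tail, ← Fin.succ_castSucc] using hv t.succ
  · rintro ⟨c, hac, v, rfl, rfl, hv⟩
    refine ⟨Fin.cons a v, rfl, by simp [← Fin.succ_last], fun t => ?_⟩
    cases t using Fin.cases with
    | zero => simpa using hac
    | succ t => simpa [← Fin.succ_castSucc] using hv t

def SameGen (n : ℕ) (i j : Fin N) : Prop :=
  ∃ w, hasPath R1 n i w ∧ hasPath R1 n j w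

lemma sameGen_zero {i j : Fin N} : SameGen R1 0 i j ↔ i = j := by
  simp [SameGen, hasPath_zero, eq_comm]

lemma sameGen_succ {n : ℕ} {i j : Fin N} :
    SameGen R1 (n + 1) i j ↔ ∃ a b, R1 i a = 1 ∧ SameGen R1 n a b ∧ R1 j b = 1 := by
  simp only [SameGen, hasPath_succ]
  grind

lemma exists_lt_succ_sameGen_iff {k : ℕ} {i j : Fin N} :
    (∃ n < k + 1, SameGen R1 n i j) ↔
      i = j ∨ ∃ a b, R1 i a = 1 ∧ (∃ n < k, SameGen R1 n a b) ∧ R1 j b = 1 := by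
  simp only [Nat.exists_lt_succ_left, sameGen_zero, sameGen_succ]
  grind

end Paths

section BooleanStep

open scoped Finset

variable {N : ℕ}

lemma mul_mul_transpose_apply_of_boole {A B : Matrix (Fin N) (Fin N) ℝ}
    {P Q : Fin N → Fin N → Prop} [DecidableRel P] [DecidableRel Q]
    (hA : ∀ i j, A i j = if P i j then 1 else 0) (hB : ∀ i j, B i j = if Q i j then 1 else 0)
    (i j : Fin N) :
    (A * B * Aᵀ) i j = #{ab : Fin N × Fin N | P i ab.1 ∧ Q ab.1 ab.2 ∧ P j ab.2} := by
  simp only [mul_apply, transpose_apply, hA, hB, Finset.sum_mul, ← Finset.sum_boole]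
  rw [Fintype.sum_prod_type, Finset.sum_comm]
  simp only [ite_zero_mul_ite_zero, mul_one, and_assoc]

lemma min1M_one_add_mul_mul_transpose_of_boole {A B : Matrix (Fin N) (Fin N) ℝ}
    {P Q : Fin N → Fin N → Prop} [DecidableRel P] [DecidableRel Q]
    (hA : ∀ i j, A i j = if P i j then 1 else 0) (hB : ∀ i j, B i j = if Q i j then 1 else 0)
    (i j : Fin N) :
    min1M (1 + A * B * Aᵀ) i j =
      if i = j ∨ ∃ a b, P i a ∧ Q a b ∧ P j b then 1 else 0 := by
  rw [min1M, of_apply, Matrix.add_apply, one_apply, mul_mul_transpose_apply_of_boole hA hB]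
  set c := #{ab : Fin N × Fin N | P i ab.1 ∧ Q ab.1 ab.2 ∧ P j ab.2}
  have hc : 0 < c ↔ ∃ a b, P i a ∧ Q a b ∧ P j b := by
    simp [c, Finset.card_pos, Finset.filter_nonempty_iff]
  by_cases hij : i = j
  · simp [hij]
  rcases Nat.eq_zero_or_pos c with h | h
  · have hnone : ¬∃ a b, P i a ∧ Q a b ∧ P j b := fun hex => (hc.2 hex).ne' h
    rw [if_neg hij, if_neg (not_or.2 ⟨hij, hnone⟩), h]
    norm_num
  · rw [if_neg hij, if_pos (Or.inr (hc.1 h)), zero_add]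
    exact min_eq_right (Nat.one_le_cast.2 h)

end BooleanStep

open scoped Classical in
lemma apply_eq_ite_exists_sameGen {N : ℕ} {R1 : Matrix (Fin N) (Fin N) ℝ}
    (hR1 : ∀ i j, R1 i j = 0 ∨ R1 i j = 1) {R : ℕ → Matrix (Fin N) (Fin N) ℝ}
    (h0 : R 0 = 0) (hstep : ∀ k, R (k + 1) = min1M (1 + R1 * R k * R1ᵀ)) (k : ℕ) (i j : Fin N) :
    R k i j = if ∃ n < k, SameGen R1 n i j then 1 else 0 := by
  induction k generalizing i j with
  | zero => simp [h0]
  | succ k ih =>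
    have hR1_boole : ∀ i j, R1 i j = if R1 i j = 1 then 1 else 0 := fun i j => by
      rcases hR1 i j with h | h <;> simp [h]
    rw [hstep, min1M_one_add_mul_mul_transpose_of_boole hR1_boole ih]
    exact if_congr (exists_lt_succ_sameGen_iff R1).symm rfl rfl

lemma eventually_exists_lt_iff_exists (p : ℕ → Prop) :
    ∀ᶠ k in atTop, (∃ n < k, p n) ↔ ∃ n, p n := by
  by_cases h : ∃ n, p n
  · obtain ⟨n, hn⟩ := h
    filter_upwards [eventually_gt_atTop n] with k hk
    exact iff_of_true ⟨n, hk, hn⟩ ⟨n, hn⟩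
  · exact .of_forall fun k => iff_of_false (fun ⟨n, _, hn⟩ => h ⟨n, hn⟩) h

theorem same_generation_limit {N : ℕ}
    (R1 : Matrix (Fin N) (Fin N) ℝ)
    (hR1 : ∀ i j, R1 i j = 0 ∨ R1 i j = 1)
    (R : ℕ → Matrix (Fin N) (Fin N) ℝ)
    (h0 : R 0 = 0)
    (hstep : ∀ k, R (k + 1) = min1M (1 + R1 * R k * R1ᵀ))
    (Rstar : Matrix (Fin N) (Fin N) ℝ)
    (hlim : Tendsto R atTop (𝓝 Rstar)) :
    ∀ i j, Rstar i j = 1 ↔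
      ∃ (n : ℕ) (w : Fin N), hasPath R1 n i w ∧ hasPath R1 n j w := by
  classical
  intro i j
  have h_entry : Tendsto (fun k => R k i j) atTop (𝓝 (Rstar i j)) :=
    tendsto_pi_nhds.1 (tendsto_pi_nhds.1 hlim i) j
  have h_const : Tendsto (fun k => R k i j) atTop
      (𝓝 (if ∃ n, SameGen R1 n i j then 1 else 0)) := by
    refine tendsto_const_nhds.congr' ?_
    filter_upwards [eventually_exists_lt_iff_exists (SameGen R1 · i j)] with k hk
    rw [apply_eq_ite_exists_sameGen hR1 h0 hstep, if_congr hk rfl rfl]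
  rw [tendsto_nhds_unique h_entry h_const]
  split_ifs with h <;> simpa [SameGen] using h
end
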